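/- Let 0<α,β<1 and 1<p,q<∞ in the plane ℝ×ℝ. Define σ = δ_{(0,0)} (Dirac mass at the origin) and, for ρ>0, ω_ρ = Σ_{k≥1} δ_{(2^k, 2^{−ρk})}. If ρ ≤ (1−α)/(1−β), then the product Muckenhoupt characteristic A^{(α,β),(1,1)}_{p,q}(σ,ω_ρ) = sup over rectangles I×J of |I|^{α−1}|J|^{β−1} ω_ρ(I×J)^{1/q} σ(I×J)^{1/p'} is finite. -/

import Mathlib

/-!
Only rectangles `[a, b] × [c, d]` containing the origin contribute, and for them `|I| ≥ b` and
`|J| ≥ d`. An atom `(2^{k+1}, 2^{-ρ(k+1)})` of `ω_ρ` in the rectangle forces `2^{k+1} ≤ b` and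
`d ≥ 2^{-ρ(k+1)}`, so by `ρ(1-β) ≤ 1-α` it contributes at most `(2^{k+1}/b)^{1-α}` to
`|I|^{α-1}|J|^{β-1} ω_ρ(I×J)`. These contributions are dominated by a geometric series, so
their sum is at most `(1 - 2^{α-1})⁻¹`. Finally `ω_ρ(I×J)^{1/q} ≤ ω_ρ(I×J)` because `ω_ρ`
counts points.
-/

open MeasureTheory ENNReal Set

noncomputable section

/-- The measure `ω_ρ = Σ_{k≥1} δ_{(2^k, 2^{−ρk})}` in the plane. -/
noncomputable def omegaRho (ρ : ℝ) : Measure (ℝ × ℝ) :=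
  Measure.sum fun k : ℕ =>
    Measure.dirac (((2 : ℝ) ^ ((k : ℝ) + 1), (2 : ℝ) ^ (-(ρ * ((k : ℝ) + 1)))) : ℝ × ℝ)

def omegaAtom (ρ : ℝ) (k : ℕ) : ℝ × ℝ :=
  ((2 : ℝ) ^ ((k : ℝ) + 1), (2 : ℝ) ^ (-(ρ * ((k : ℝ) + 1))))

lemma omegaAtom_fst (ρ : ℝ) (k : ℕ) : (omegaAtom ρ k).1 = 2 ^ (k + 1) := by
  simp [omegaAtom, ← Real.rpow_natCast]

lemma omegaRho_apply (ρ : ℝ) {s : Set (ℝ × ℝ)} (hs : MeasurableSet s) :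
    omegaRho ρ s = ∑' k, s.indicator 1 (omegaAtom ρ k) := by
  simp only [omegaRho, Measure.sum_apply _ hs, Measure.dirac_apply' _ hs, omegaAtom]

lemma omegaRho_eq_zero_or_one_le (ρ : ℝ) {s : Set (ℝ × ℝ)} (hs : MeasurableSet s) :
    omegaRho ρ s = 0 ∨ 1 ≤ omegaRho ρ s := by
  rw [omegaRho_apply ρ hs]
  by_cases h : ∃ k, omegaAtom ρ k ∈ s
  · obtain ⟨k, hk⟩ := h
    exact Or.inr ((indicator_of_mem hk 1).symm.le.trans (ENNReal.le_tsum k))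
  · push Not at h
    simp [indicator_of_notMem (h _)]

lemma ENNReal.rpow_le_self_of_eq_zero_or_one_le {x : ℝ≥0∞} {y : ℝ} (hx : x = 0 ∨ 1 ≤ x)
    (hy₀ : 0 < y) (hy₁ : y ≤ 1) : x ^ y ≤ x := by
  rcases hx with rfl | hx
  · rw [zero_rpow_of_pos hy₀]
  · simpa using ENNReal.rpow_le_rpow_of_exponent_le hx hy₁

/-- Measured from the largest `N` with `2 ^ N ≤ b`, the terms are bounded by `(2⁻¹ ^ θ) ^ j`
with distinct `j`. -/
lemma tsum_indicator_two_pow_div_rpow_le {θ b : ℝ} (hθ : 0 < θ) :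
    ∑' k : ℕ, {k : ℕ | (2 : ℝ) ^ (k + 1) ≤ b}.indicator
        (fun k => ENNReal.ofReal (((2 : ℝ) ^ (k + 1) / b) ^ θ)) k
      ≤ (1 - ENNReal.ofReal ((2 : ℝ)⁻¹ ^ θ))⁻¹ := by
  set S := {k : ℕ | (2 : ℝ) ^ (k + 1) ≤ b}
  by_cases hb : 1 ≤ b
  swap
  · have hS : ∀ k, k ∉ S := fun k hk => hb (le_trans (one_le_pow₀ one_le_two) hk)
    simp [indicator_of_notMem (hS _)]
  obtain ⟨N, hNb, hbN⟩ := exists_nat_pow_near hb one_lt_two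
  have hkN : ∀ k : S, (k : ℕ) + 1 ≤ N := fun k =>
    Nat.lt_succ_iff.1 ((pow_lt_pow_iff_right₀ (one_lt_two : (1 : ℝ) < 2)).1 (k.2.trans_lt hbN))
  have hterm : ∀ k : S,
      ((2 : ℝ) ^ ((k : ℕ) + 1) / b) ^ θ ≤ ((2 : ℝ)⁻¹ ^ θ) ^ (N - ((k : ℕ) + 1)) := by
    intro k
    have h2N : (2 : ℝ) ^ ((k : ℕ) + 1) / 2 ^ N = 2⁻¹ ^ (N - ((k : ℕ) + 1)) := by
      rw [inv_pow_sub₀ two_ne_zero (hkN k)]; ring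
    rw [Real.rpow_pow_comm (by norm_num), ← h2N]
    gcongr
  rw [← tsum_subtype]
  calc ∑' k : S, ENNReal.ofReal (((2 : ℝ) ^ ((k : ℕ) + 1) / b) ^ θ)
      ≤ ∑' k : S, ENNReal.ofReal ((2 : ℝ)⁻¹ ^ θ) ^ (N - ((k : ℕ) + 1)) :=
        ENNReal.tsum_le_tsum fun k => by
          rw [← ENNReal.ofReal_pow (by positivity)]
          exact ENNReal.ofReal_le_ofReal (hterm k)
    _ ≤ ∑' j : ℕ, ENNReal.ofReal ((2 : ℝ)⁻¹ ^ θ) ^ j :=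
        ENNReal.tsum_comp_le_tsum_of_injective (f := fun k : S => N - ((k : ℕ) + 1))
          (fun k l hkl => Subtype.ext (by have := hkN k; have := hkN l; simp at hkl; omega)) _
    _ = (1 - ENNReal.ofReal ((2 : ℝ)⁻¹ ^ θ))⁻¹ := ENNReal.tsum_geometric _

section RectangleWeight

variable {α β ρ a b c d : ℝ}

lemma rect_weight_le_of_omegaAtom_mem {k : ℕ} (hα : α < 1) (hβ : β < 1)
    (hρ : ρ * (1 - β) ≤ 1 - α) (ha : a ≤ 0) (hc : c ≤ 0)
    (hk : omegaAtom ρ k ∈ Icc a b ×ˢ Icc c d) :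
    (b - a) ^ (α - 1) * (d - c) ^ (β - 1) ≤ ((2 : ℝ) ^ (k + 1) / b) ^ (1 - α) := by
  obtain ⟨⟨-, hxb⟩, -, hyd⟩ := hk
  rw [omegaAtom_fst] at hxb
  set x : ℝ := 2 ^ (k + 1) with hx_def
  set y : ℝ := (omegaAtom ρ k).2 with hy_def
  have hx : 0 < x := by positivity
  have hb : 0 < b := hx.trans_le hxb
  have hy : 0 < y := Real.rpow_pos_of_pos two_pos _
  have hJ₀ : 0 < d - c := by linarith
  have hI : (b - a) ^ (α - 1) ≤ b ^ (α - 1) :=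
    Real.rpow_le_rpow_of_nonpos hb (by linarith) (by linarith)
  have hJ : (d - c) ^ (β - 1) ≤ x ^ (1 - α) := calc
    (d - c) ^ (β - 1) ≤ y ^ (β - 1) := Real.rpow_le_rpow_of_nonpos hy (by linarith) (by linarith)
    _ = 2 ^ (ρ * (1 - β) * ((k : ℝ) + 1)) := by
      rw [hy_def, omegaAtom, ← Real.rpow_mul zero_le_two]; ring_nf
    _ ≤ 2 ^ ((1 - α) * ((k : ℝ) + 1)) :=
      Real.rpow_le_rpow_of_exponent_le one_le_two (by gcongr)
    _ = x ^ (1 - α) := by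
      rw [mul_comm, Real.rpow_mul zero_le_two, hx_def]; norm_cast
  calc (b - a) ^ (α - 1) * (d - c) ^ (β - 1) ≤ b ^ (α - 1) * x ^ (1 - α) :=
        mul_le_mul hI hJ (Real.rpow_nonneg hJ₀.le _) (Real.rpow_nonneg hb.le _)
    _ = (x / b) ^ (1 - α) := by
      rw [Real.div_rpow hx.le hb.le, div_eq_mul_inv, ← Real.rpow_neg hb.le, neg_sub, mul_comm]

lemma ofReal_rect_weight_mul_indicator_le (hα : α < 1) (hβ : β < 1)
    (hρ : ρ * (1 - β) ≤ 1 - α) (ha : a ≤ 0) (hc : c ≤ 0) (k : ℕ) :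
    ENNReal.ofReal ((b - a) ^ (α - 1) * (d - c) ^ (β - 1)) *
        (Icc a b ×ˢ Icc c d).indicator 1 (omegaAtom ρ k)
      ≤ {k : ℕ | (2 : ℝ) ^ (k + 1) ≤ b}.indicator
          (fun k => ENNReal.ofReal (((2 : ℝ) ^ (k + 1) / b) ^ (1 - α))) k := by
  by_cases hk : omegaAtom ρ k ∈ Icc a b ×ˢ Icc c d
  · have hkb : k ∈ {k : ℕ | (2 : ℝ) ^ (k + 1) ≤ b} := (omegaAtom_fst ρ k).symm.trans_le hk.1.2
    rw [indicator_of_mem hk, indicator_of_mem hkb, Pi.one_apply, mul_one]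
    exact ENNReal.ofReal_le_ofReal (rect_weight_le_of_omegaAtom_mem hα hβ hρ ha hc hk)
  · rw [indicator_of_notMem hk, mul_zero]
    exact zero_le

end RectangleWeight

theorem dirac_example_characteristic_finite_general (α β p q ρ : ℝ)
    (hα1 : α < 1) (hβ1 : β < 1) (hp : 1 < p) (hq : 1 < q)
    (hρle : ρ ≤ (1 - α) / (1 - β)) :
    ∃ A : ℝ≥0∞, A ≠ ∞ ∧
      ∀ a b c d : ℝ, a < b → c < d →
        ENNReal.ofReal ((b - a) ^ (α - 1) * (d - c) ^ (β - 1)) *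
            (omegaRho ρ (Icc a b ×ˢ Icc c d)) ^ (1 / q) *
            (Measure.dirac ((0, 0) : ℝ × ℝ) (Icc a b ×ˢ Icc c d)) ^ (1 - 1 / p)
          ≤ A := by
  have hρ : ρ * (1 - β) ≤ 1 - α := (le_div_iff₀ (by linarith)).1 hρle
  have hratio : ENNReal.ofReal ((2 : ℝ)⁻¹ ^ (1 - α)) < 1 :=
    ENNReal.ofReal_lt_one.2 (Real.rpow_lt_one (by norm_num) (by norm_num) (by linarith))
  refine ⟨_, ENNReal.inv_ne_top.2 (tsub_pos_of_lt hratio).ne', fun a b c d _ _ => ?_⟩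
  set R := Icc a b ×ˢ Icc c d
  have hR : MeasurableSet R := measurableSet_Icc.prod measurableSet_Icc
  rw [Measure.dirac_apply' _ hR]
  by_cases h0 : ((0 : ℝ), (0 : ℝ)) ∈ R
  · rw [indicator_of_mem h0, Pi.one_apply, one_rpow, mul_one]
    obtain ⟨⟨ha, -⟩, hc, -⟩ := h0
    calc ENNReal.ofReal ((b - a) ^ (α - 1) * (d - c) ^ (β - 1)) * omegaRho ρ R ^ (1 / q)
        ≤ ENNReal.ofReal ((b - a) ^ (α - 1) * (d - c) ^ (β - 1)) * omegaRho ρ R := by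
          gcongr
          exact ENNReal.rpow_le_self_of_eq_zero_or_one_le (omegaRho_eq_zero_or_one_le ρ hR)
            (by positivity) ((div_le_one (by linarith)).2 hq.le)
      _ = ∑' k, ENNReal.ofReal ((b - a) ^ (α - 1) * (d - c) ^ (β - 1)) *
            R.indicator 1 (omegaAtom ρ k) := by
          rw [omegaRho_apply ρ hR, ENNReal.tsum_mul_left]
      _ ≤ _ := ENNReal.tsum_le_tsum (ofReal_rect_weight_mul_indicator_le hα1 hβ1 hρ ha hc)
      _ ≤ _ := tsum_indicator_two_pow_div_rpow_le (by linarith)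
  · rw [indicator_of_notMem h0, zero_rpow_of_pos (sub_pos.2 ((div_lt_one (by linarith)).2 hp)),
      mul_zero]
    exact zero_le

/-- **Finiteness of the rectangle characteristic for the Dirac/point-mass pair.**
Let `0 < α, β < 1`, `1 < p, q < ∞`, `σ = δ_{(0,0)}` and `ω_ρ = Σ_{k≥1} δ_{(2^k,2^{−ρk})}`.
If `0 < ρ ≤ (1−α)/(1−β)`, then the product Muckenhoupt characteristic
`A^{(α,β),(1,1)}_{p,q}(σ, ω_ρ) = sup_{I×J} |I|^{α−1}|J|^{β−1} ω_ρ(I×J)^{1/q} σ(I×J)^{1/p'}`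
is finite. -/
theorem dirac_example_characteristic_finite (α β p q ρ : ℝ)
    (hα : 0 < α) (hα1 : α < 1) (hβ : 0 < β) (hβ1 : β < 1) (hp : 1 < p) (hq : 1 < q)
    (hρ : 0 < ρ) (hρle : ρ ≤ (1 - α) / (1 - β)) :
    ∃ A : ℝ≥0∞, A ≠ ∞ ∧
      ∀ a b c d : ℝ, a < b → c < d →
        ENNReal.ofReal ((b - a) ^ (α - 1) * (d - c) ^ (β - 1)) *
            (omegaRho ρ (Icc a b ×ˢ Icc c d)) ^ (1 / q) *
            (Measure.dirac ((0, 0) : ℝ × ℝ) (Icc a b ×ˢ Icc c d)) ^ (1 - 1 / p)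
          ≤ A :=
  dirac_example_characteristic_finite_general α β p q ρ hα1 hβ1 hp hq hρle

end
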